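/- Let M = A₁…Aₙ be a convex n-gon in the plane with n > 3 such that no four of its vertices lie on a common circle. For each i let Cᵢ be the circle through A_{i−1}, Aᵢ, A_{i+1} (indices mod n). Call Cᵢ empty if all other vertices of M lie strictly outside Cᵢ and full if they all lie strictly inside. Then at least two of the circles Cᵢ are empty and at least two are full. -/

import Mathlib

noncomputable def planeDet (u v : ℂ) : ℝ := u.re * v.im - u.im * v.re

def IsConvexPolygon {n : ℕ} (V : ZMod n → ℂ) : Prop :=
  ∀ i j : ZMod n, j ≠ i → j ≠ i + 1 → 0 < planeDet (V (i + 1) - V i) (V j - V i)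

/-- No four vertices of the family `V` lie on a common circle. -/
def NoFourConcyclic {n : ℕ} [NeZero n] (V : ZMod n → ℂ) : Prop :=
  ∀ (O : ℂ) (r : ℝ), Set.ncard {i : ZMod n | dist O (V i) = r} ≤ 3

/-- The circle through the three consecutive vertices `V (i-1), V i, V (i+1)` is *empty*:
all other vertices lie strictly outside it. -/
def EmptyNbrCircle {n : ℕ} (V : ZMod n → ℂ) (i : ZMod n) : Prop :=
  ∃ (O : ℂ) (r : ℝ), dist O (V (i - 1)) = r ∧ dist O (V i) = r ∧ dist O (V (i + 1)) = r ∧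
    ∀ j : ZMod n, j ≠ i - 1 → j ≠ i → j ≠ i + 1 → r < dist O (V j)

/-- The circle through the three consecutive vertices `V (i-1), V i, V (i+1)` is *full*:
all other vertices lie strictly inside it. -/
def FullNbrCircle {n : ℕ} (V : ZMod n → ℂ) (i : ZMod n) : Prop :=
  ∃ (O : ℂ) (r : ℝ), dist O (V (i - 1)) = r ∧ dist O (V i) = r ∧ dist O (V (i + 1)) = r ∧
    ∀ j : ZMod n, j ≠ i - 1 → j ≠ i → j ≠ i + 1 → dist O (V j) < r

/-!
Call a circle *supporting* if no vertex lies strictly inside it (for empty circles) or strictly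
outside it (for full ones). If a circle passes through two vertices `p` and `q`, moving its centre
along the perpendicular bisector of `pq` changes the power of each point `x` by a multiple of the
signed area of `p q x`; pushing the centre until the circle first meets a vertex on one side of
`pq` yields a supporting circle through a triangle `p q x`. Starting from a supporting circle
through an edge and repeating this inside a shorter and shorter arc of the polygon, one arrives at
a supporting circle through three consecutive vertices. The ear so found avoids the starting
edge, so starting again from the edge behind it gives a second one, and since no four vertices are
concyclic, supporting circles through three vertices are strictly empty or full.
-/

open Complex

noncomputable def circlePower (O : ℂ) (r : ℝ) (x : ℂ) : ℝ := dist O x ^ 2 - r ^ 2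

lemma circlePower_of_dist_eq {O x : ℂ} {r : ℝ} (h : dist O x = r) : circlePower O r x = 0 := by
  simp [circlePower, h]

lemma dist_eq_of_circlePower_eq_zero {O x : ℂ} {r : ℝ} (hr : 0 ≤ r) (h : circlePower O r x = 0) :
    dist O x = r :=
  (sq_eq_sq₀ dist_nonneg hr).1 (sub_eq_zero.1 h)

lemma circlePower_add_mul_I (O p x u : ℂ) (t : ℝ) :
    circlePower (O + t * (I * u)) (dist (O + t * (I * u)) p) x =
      circlePower O (dist O p) x - t * (2 * planeDet u (x - p)) := by
  simp only [circlePower, Complex.dist_eq, Complex.sq_norm, Complex.normSq_apply, planeDet,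
    sub_re, sub_im, add_re, add_im, mul_re, mul_im, I_re, I_im, ofReal_re, ofReal_im]
  ring

lemma Finset.Nonempty.exists_touching_shift {ι : Type*} {T : Finset ι} (hT : T.Nonempty)
    (f e : ι → ℝ) (s : ℝ) (he : ∀ i ∈ T, 0 < e i) :
    ∃ t : ℝ, (∃ k ∈ T, f k - t * e k = 0) ∧ (∀ i ∈ T, 0 ≤ s * (f i - t * e i)) ∧
      ((∀ i ∈ T, 0 ≤ s * f i) → 0 ≤ s * t) := by
  obtain ⟨k, hk, hmin⟩ := T.exists_min_image (fun i => s * f i / e i) hT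
  have hek := (he k hk).ne'
  refine ⟨f k / e k, ⟨k, hk, by field_simp; ring⟩, fun i hi => ?_, fun hf => ?_⟩
  · have hei := he i hi
    calc 0 ≤ (s * f i / e i - s * f k / e k) * e i := mul_nonneg (sub_nonneg.2 (hmin i hi)) hei.le
      _ = s * (f i - f k / e k * e i) := by field_simp
  · rw [← mul_div_assoc]
    exact div_nonneg (hf k hk) (he k hk).le

lemma planeDet_self (u : ℂ) : planeDet u u = 0 := by
  simp only [planeDet]; ring

lemma planeDet_sub_rotate (x y z : ℂ) :
    planeDet (y - x) (z - x) = planeDet (z - y) (x - y) := by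
  simp only [planeDet, sub_re, sub_im]; ring

lemma planeDet_sub_swap (x y z : ℂ) :
    planeDet (y - x) (z - x) = -planeDet (x - y) (z - y) := by
  simp only [planeDet, sub_re, sub_im]; ring

/-- Seen from `K`, the rays to `A`, `B`, `J`, `C` turn counterclockwise in this order; the
Plücker relation among the four directions turns this into an inequality. -/
lemma planeDet_pos_of_fan {A B C K J : ℂ}
    (hABK : 0 < planeDet (B - A) (K - A)) (hCKA : 0 < planeDet (K - C) (A - C))
    (hCKB : 0 < planeDet (K - C) (B - C)) (hCKJ : 0 < planeDet (K - C) (J - C))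
    (hKBJ : 0 < planeDet (B - K) (J - K)) : 0 < planeDet (A - K) (J - K) := by
  have plucker : planeDet (A - K) (J - K) * planeDet (K - C) (B - C) =
      planeDet (B - A) (K - A) * planeDet (K - C) (J - C) +
        planeDet (K - C) (A - C) * planeDet (B - K) (J - K) := by
    simp only [planeDet, sub_re, sub_im]; ring
  have hprod : 0 < planeDet (A - K) (J - K) * planeDet (K - C) (B - C) := by
    rw [plucker]; positivity
  exact (pos_iff_pos_of_mul_pos hprod).2 hCKB

section Polygon

variable {n : ℕ} {V : ZMod n → ℂ}

lemma add_natCast_ne_add_natCast (a : ZMod n) {m₁ m₂ : ℕ} (h₁ : m₁ < n) (h₂ : m₂ < n)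
    (h : m₁ ≠ m₂) : a + (m₁ : ZMod n) ≠ a + m₂ := by
  rw [Ne, add_right_inj, ZMod.natCast_eq_natCast_iff', Nat.mod_eq_of_lt h₁, Nat.mod_eq_of_lt h₂]
  exact h

lemma add_natCast_ne_self (a : ZMod n) {m : ℕ} (h₀ : 0 < m) (h : m < n) :
    a + (m : ZMod n) ≠ a := by
  simpa using add_natCast_ne_add_natCast a h (h₀.trans h) h₀.ne'

lemma exists_add_natCast_eq [NeZero n] (a l : ZMod n) : ∃ m < n, a + (m : ZMod n) = l :=
  ⟨(l - a).val, ZMod.val_lt _, by rw [ZMod.natCast_zmod_val]; ring⟩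

theorem IsConvexPolygon.planeDet_chord_pos (hconv : IsConvexPolygon V) {ℓ : ℕ} (hℓn : ℓ < n) :
    ∀ {a : ZMod n} {m : ℕ}, 0 < m → m < ℓ →
      0 < planeDet (V a - V (a + ℓ)) (V (a + m) - V (a + ℓ)) := by
  induction ℓ using Nat.strong_induction_on with
  | _ ℓ ih =>
  intro a m hm₀ hmℓ
  have hc' : a + ((ℓ - 1 : ℕ) : ZMod n) + 1 = a + ℓ := by
    rw [Nat.cast_sub (by omega : 1 ≤ ℓ), Nat.cast_one]; ring
  set c' := a + ((ℓ - 1 : ℕ) : ZMod n)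
  have hedge : ∀ j, j ≠ c' → j ≠ a + ℓ → 0 < planeDet (V (a + ℓ) - V c') (V j - V c') := by
    intro j h₁ h₂
    rw [← hc'] at h₂ ⊢
    exact hconv c' j h₁ h₂
  have hac' : a ≠ c' := (add_natCast_ne_self a (by omega) (by omega)).symm
  have hac : a ≠ a + ℓ := (add_natCast_ne_self a (by omega) hℓn).symm
  have hfirst : 0 < planeDet (V (a + 1) - V a) (V (a + ℓ) - V a) :=
    hconv a _ hac.symm
      (by simpa using add_natCast_ne_add_natCast a (m₂ := 1) hℓn (by omega) (by omega))
  rcases Nat.lt_or_ge m 2 with hm | hm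
  · obtain rfl : m = 1 := by omega
    rw [Nat.cast_one, planeDet_sub_rotate]
    exact hfirst
  rcases Nat.lt_or_ge m (ℓ - 1) with hm' | hm'
  · have hb : a + 1 + ((ℓ - 1 : ℕ) : ZMod n) = a + ℓ := by
      rw [Nat.cast_sub (by omega : 1 ≤ ℓ), Nat.cast_one]; ring
    have hj : a + 1 + ((m - 1 : ℕ) : ZMod n) = a + m := by
      rw [Nat.cast_sub (by omega : 1 ≤ m), Nat.cast_one]; ring
    have hinner : 0 < planeDet (V (a + 1) - V (a + 1 + ((ℓ - 1 : ℕ) : ZMod n)))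
        (V (a + 1 + ((m - 1 : ℕ) : ZMod n)) - V (a + 1 + ((ℓ - 1 : ℕ) : ZMod n))) :=
      ih (ℓ - 1) (by omega) (by omega) (by omega) (by omega)
    rw [hb, hj] at hinner
    have hne : ∀ {k : ℕ}, k < ℓ - 1 → a + (k : ZMod n) ≠ c' := fun hk =>
      add_natCast_ne_add_natCast a (by omega) (by omega) hk.ne
    have hne' : ∀ {k : ℕ}, k < ℓ → a + (k : ZMod n) ≠ a + ℓ := fun hk =>
      add_natCast_ne_add_natCast a (by omega) hℓn hk.ne
    refine planeDet_pos_of_fan hfirst (hedge a hac' hac) ?_ (hedge _ (hne hm') (hne' hmℓ)) hinner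
    simpa using hedge (a + ((1 : ℕ) : ZMod n)) (hne (by omega)) (hne' (by omega))
  · obtain rfl : m = ℓ - 1 := by omega
    rw [← planeDet_sub_rotate]
    exact hedge a hac' hac

theorem IsConvexPolygon.planeDet_chord_nonpos (hconv : IsConvexPolygon V) (a : ZMod n)
    {ℓ m : ℕ} (hℓ : 0 < ℓ) (hℓn : ℓ < n) (hmn : m < n) (hm : ¬(0 < m ∧ m < ℓ)) :
    planeDet (V a - V (a + ℓ)) (V (a + m) - V (a + ℓ)) ≤ 0 := by
  rcases Nat.lt_trichotomy m ℓ with hlt | rfl | hgt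
  · obtain rfl : m = 0 := by omega
    simp [planeDet_self]
  · simp [planeDet]
  · have hn : a + ℓ + ((n - ℓ : ℕ) : ZMod n) = a := by
      rw [Nat.cast_sub hℓn.le, ZMod.natCast_self]; ring
    have hm' : a + ℓ + ((m - ℓ : ℕ) : ZMod n) = a + m := by
      rw [Nat.cast_sub hgt.le]; ring
    have := hconv.planeDet_chord_pos (a := a + ℓ) (by omega : n - ℓ < n)
      (m := m - ℓ) (by omega) (by omega)
    rw [hn, hm'] at this
    rw [planeDet_sub_swap]
    linarith

/-- No vertex lies strictly inside (`s = 1`) or strictly outside (`s = -1`) the circle. -/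
def IsSupportingCircle (V : ZMod n → ℂ) (s : ℝ) (O : ℂ) (r : ℝ) : Prop :=
  ∀ l, 0 ≤ s * circlePower O r (V l)

def HasSupportingNbrCircle (V : ZMod n → ℂ) (s : ℝ) (i : ZMod n) : Prop :=
  ∃ (O : ℂ) (r : ℝ), dist O (V (i - 1)) = r ∧ dist O (V i) = r ∧ dist O (V (i + 1)) = r ∧
    IsSupportingCircle V s O r

theorem IsConvexPolygon.exists_supportingCircle_through_edge [NeZero n]
    (hconv : IsConvexPolygon V) (hn : 3 ≤ n) (s : ℝ) (a : ZMod n) :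
    ∃ (O : ℂ) (r : ℝ), dist O (V a) = r ∧ dist O (V (a + 1)) = r ∧ IsSupportingCircle V s O r := by
  set O₀ := midpoint ℝ (V a) (V (a + 1))
  have hO₀ : dist O₀ (V (a + 1)) = dist O₀ (V a) := by
    rw [dist_comm, dist_right_midpoint, dist_midpoint_left, dist_comm]
  set u := V (a + 1) - V a
  set T := Finset.univ.filter fun l => l ≠ a ∧ l ≠ a + 1
  have hT : T.Nonempty := ⟨a + 2, Finset.mem_filter.2 ⟨Finset.mem_univ _,
    by simpa using add_natCast_ne_self a (m := 2) two_pos (by omega),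
    by simpa using
      add_natCast_ne_add_natCast a (m₁ := 2) (m₂ := 1) (by omega) (by omega) (by decide)⟩⟩
  obtain ⟨t, -, hpos, -⟩ := hT.exists_touching_shift (fun l => circlePower O₀ (dist O₀ (V a)) (V l))
    (fun l => 2 * planeDet u (V l - V a)) s fun l hl => by
      simp only [T, Finset.mem_filter] at hl
      exact mul_pos two_pos (hconv a l hl.2.1 hl.2.2)
  set O := O₀ + t * (I * u)
  have hpow : ∀ x, circlePower O (dist O (V a)) x =
      circlePower O₀ (dist O₀ (V a)) x - t * (2 * planeDet u (x - V a)) :=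
    fun x => circlePower_add_mul_I O₀ (V a) x u t
  have hb : circlePower O (dist O (V a)) (V (a + 1)) = 0 := by
    rw [hpow, circlePower_of_dist_eq hO₀, planeDet_self]; ring
  refine ⟨O, dist O (V a), rfl, dist_eq_of_circlePower_eq_zero dist_nonneg hb, fun l => ?_⟩
  by_cases hl : l ∈ T
  · rw [hpow]; exact hpos l hl
  · simp only [T, Finset.mem_filter, Finset.mem_univ, true_and, not_and_or, not_not] at hl
    rcases hl with rfl | rfl
    · simp [circlePower]
    · simp [hb]

theorem IsConvexPolygon.exists_supportingTriangle_of_chord [NeZero n] (hconv : IsConvexPolygon V)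
    (s : ℝ) {a : ZMod n} {ℓ : ℕ} (hℓ : 2 ≤ ℓ) (hℓn : ℓ < n) {O : ℂ} {r : ℝ}
    (ha : dist O (V a) = r) (hc : dist O (V (a + ℓ)) = r) (hO : IsSupportingCircle V s O r) :
    ∃ k, 0 < k ∧ k < ℓ ∧ ∃ (O' : ℂ) (r' : ℝ), dist O' (V a) = r' ∧ dist O' (V (a + k)) = r' ∧
      dist O' (V (a + ℓ)) = r' ∧ IsSupportingCircle V s O' r' := by
  set u := V a - V (a + ℓ)
  have hT : (Finset.Ioo 0 ℓ).Nonempty := ⟨1, by simp; omega⟩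
  obtain ⟨t, ⟨k, hk, hkt⟩, hpos, hsign⟩ := hT.exists_touching_shift
    (fun m => circlePower O r (V (a + m))) (fun m => 2 * planeDet u (V (a + m) - V (a + ℓ))) s
    fun m hm => by
      rw [Finset.mem_Ioo] at hm
      exact mul_pos two_pos (hconv.planeDet_chord_pos hℓn hm.1 hm.2)
  set O' := O + t * (I * u)
  have hpow : ∀ x, circlePower O' (dist O' (V (a + ℓ))) x =
      circlePower O r x - t * (2 * planeDet u (x - V (a + ℓ))) := by
    intro x; rw [circlePower_add_mul_I, hc]
  rw [Finset.mem_Ioo] at hk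
  refine ⟨k, hk.1, hk.2, O', dist O' (V (a + ℓ)), ?_, ?_, rfl, fun l => ?_⟩
  · apply dist_eq_of_circlePower_eq_zero dist_nonneg
    rw [hpow, circlePower_of_dist_eq ha, planeDet_self]; ring
  · exact dist_eq_of_circlePower_eq_zero dist_nonneg (by rw [hpow]; exact hkt)
  · obtain ⟨m, hmn, rfl⟩ := exists_add_natCast_eq a l
    rw [hpow]
    by_cases hm : 0 < m ∧ m < ℓ
    · exact hpos m (Finset.mem_Ioo.2 hm)
    · -- off the arc the vertex is weakly right of the chord, where the shift (`0 ≤ s * t`)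
      -- can only increase `s` times its power
      have hdet := hconv.planeDet_chord_nonpos a (by omega) hℓn hmn hm
      have hst : 0 ≤ s * t := hsign fun m _ => hO (a + m)
      nlinarith [hO (a + m), mul_nonneg hst (neg_nonneg.2 hdet)]

theorem IsConvexPolygon.exists_supportingNbr_of_chord [NeZero n] (hconv : IsConvexPolygon V)
    (s : ℝ) (ℓ : ℕ) :
    ∀ {a : ZMod n} {O : ℂ} {r : ℝ}, 2 ≤ ℓ → ℓ < n → dist O (V a) = r →
      dist O (V (a + ℓ)) = r → IsSupportingCircle V s O r →
        ∃ m, 0 < m ∧ m < ℓ ∧ HasSupportingNbrCircle V s (a + m) := by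
  induction ℓ using Nat.strong_induction_on with
  | _ ℓ ih =>
  intro a O r hℓ hℓn ha hc hO
  obtain ⟨k, hk₀, hkℓ, O', r', ha', hk', hc', hO'⟩ :=
    hconv.exists_supportingTriangle_of_chord s hℓ hℓn ha hc hO
  by_cases hk : 2 ≤ k
  · obtain ⟨m, hm₀, hmk, hm⟩ := ih k hkℓ hk (by omega) ha' hk' hO'
    exact ⟨m, hm₀, by omega, hm⟩
  by_cases hkℓ' : 2 ≤ ℓ - k
  · have hend : a + k + ((ℓ - k : ℕ) : ZMod n) = a + ℓ := by
      rw [Nat.cast_sub hkℓ.le]; ring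
    obtain ⟨m, hm₀, hm, hnbr⟩ := ih (ℓ - k) (by omega) hkℓ' (by omega) hk' (hend ▸ hc') hO'
    refine ⟨k + m, by omega, by omega, ?_⟩
    rwa [Nat.cast_add, ← add_assoc]
  · obtain rfl : k = 1 := by omega
    obtain rfl : ℓ = 2 := by omega
    refine ⟨1, one_pos, one_lt_two, O', r', ?_, ?_, ?_, hO'⟩
    · simpa using ha'
    · simpa using hk'
    · rw [Nat.cast_one, add_assoc, one_add_one_eq_two]
      simpa using hc'

theorem IsConvexPolygon.exists_supportingNbr_ne [NeZero n] (hconv : IsConvexPolygon V)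
    (hn : 3 ≤ n) (s : ℝ) (a : ZMod n) : ∃ i ≠ a, HasSupportingNbrCircle V s i := by
  obtain ⟨O, r, ha, hb, hO⟩ := hconv.exists_supportingCircle_through_edge hn s a
  have hend : a + 1 + ((n - 1 : ℕ) : ZMod n) = a := by
    rw [Nat.cast_sub (by omega), ZMod.natCast_self]; ring
  obtain ⟨m, hm₀, hm, hnbr⟩ :=
    hconv.exists_supportingNbr_of_chord s (n - 1) (by omega) (by omega) hb (hend.symm ▸ ha) hO
  refine ⟨a + 1 + m, ?_, hnbr⟩
  have : a + 1 + (m : ZMod n) = a + ((1 + m : ℕ) : ZMod n) := by push_cast; ring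
  rw [this]
  exact add_natCast_ne_self a (by omega) (by omega)

theorem NoFourConcyclic.dist_ne [NeZero n] (hgen : NoFourConcyclic V) {O : ℂ} {r : ℝ}
    {i j k l : ZMod n} (hij : i ≠ j) (hik : i ≠ k) (hjk : j ≠ k) (hli : l ≠ i) (hlj : l ≠ j)
    (hlk : l ≠ k) (hi : dist O (V i) = r) (hj : dist O (V j) = r) (hk : dist O (V k) = r) :
    dist O (V l) ≠ r := by
  intro hl
  have hsub : ({l, i, j, k} : Set (ZMod n)) ⊆ {x | dist O (V x) = r} := by
    intro x hx
    simp only [Set.mem_insert_iff, Set.mem_singleton_iff] at hx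
    rcases hx with rfl | rfl | rfl | rfl <;> assumption
  have hcard : ({l, i, j, k} : Set (ZMod n)).ncard = 4 := by
    rw [Set.ncard_insert_of_notMem (by simp [hli, hlj, hlk]),
      Set.ncard_insert_of_notMem (by simp [hij, hik]), Set.ncard_pair hjk]
  have := Set.ncard_le_ncard hsub (Set.toFinite _)
  have := hgen O r
  omega

lemma nbrs_pairwise_ne (hn : 3 ≤ n) (i : ZMod n) : i - 1 ≠ i ∧ i - 1 ≠ i + 1 ∧ i ≠ i + 1 := by
  have key : ∀ m₁ m₂ : ℕ, m₁ < 3 → m₂ < 3 → m₁ ≠ m₂ → i - 1 + (m₁ : ZMod n) ≠ i - 1 + m₂ :=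
    fun m₁ m₂ h₁ h₂ h => add_natCast_ne_add_natCast (i - 1) (by omega) (by omega) h
  refine ⟨fun h => key 0 1 (by omega) (by omega) (by omega) ?_,
    fun h => key 0 2 (by omega) (by omega) (by omega) ?_,
    fun h => key 1 2 (by omega) (by omega) (by omega) ?_⟩ <;> push_cast <;> linear_combination h

theorem HasSupportingNbrCircle.emptyNbrCircle [NeZero n] (hgen : NoFourConcyclic V) (hn : 3 ≤ n)
    {i : ZMod n} (h : HasSupportingNbrCircle V 1 i) : EmptyNbrCircle V i := by
  obtain ⟨O, r, h₁, h₂, h₃, hO⟩ := h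
  obtain ⟨h₁₂, h₁₃, h₂₃⟩ := nbrs_pairwise_ne hn i
  refine ⟨O, r, h₁, h₂, h₃, fun j hj₁ hj₂ hj₃ =>
    lt_of_le_of_ne ?_ (hgen.dist_ne h₁₂ h₁₃ h₂₃ hj₁ hj₂ hj₃ h₁ h₂ h₃).symm⟩
  have := hO j
  rw [one_mul, circlePower, sub_nonneg] at this
  exact (pow_le_pow_iff_left₀ (h₂ ▸ dist_nonneg) dist_nonneg two_ne_zero).1 this

theorem HasSupportingNbrCircle.fullNbrCircle [NeZero n] (hgen : NoFourConcyclic V) (hn : 3 ≤ n)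
    {i : ZMod n} (h : HasSupportingNbrCircle V (-1) i) : FullNbrCircle V i := by
  obtain ⟨O, r, h₁, h₂, h₃, hO⟩ := h
  obtain ⟨h₁₂, h₁₃, h₂₃⟩ := nbrs_pairwise_ne hn i
  refine ⟨O, r, h₁, h₂, h₃, fun j hj₁ hj₂ hj₃ =>
    lt_of_le_of_ne ?_ (hgen.dist_ne h₁₂ h₁₃ h₂₃ hj₁ hj₂ hj₃ h₁ h₂ h₃)⟩
  have := hO j
  rw [neg_one_mul, circlePower, neg_nonneg, sub_nonpos] at this
  exact (pow_le_pow_iff_left₀ dist_nonneg (h₂ ▸ dist_nonneg) two_ne_zero).1 this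

theorem IsConvexPolygon.exists_two_supportingNbr [NeZero n] (hconv : IsConvexPolygon V)
    (hn : 3 ≤ n) (s : ℝ) :
    ∃ i j : ZMod n, i ≠ j ∧ HasSupportingNbrCircle V s i ∧ HasSupportingNbrCircle V s j := by
  obtain ⟨i, -, hi⟩ := hconv.exists_supportingNbr_ne hn s 0
  obtain ⟨j, hji, hj⟩ := hconv.exists_supportingNbr_ne hn s i
  exact ⟨i, j, hji.symm, hi, hj⟩

end Polygon

/-- **discrete H. Kneser four-vertex theorem.** For a convex `n`-gon (`n > 3`)
with no four vertices concyclic, at least two of the neighboring circles `Cᵢ` are empty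
and at least two are full. -/
theorem four_extremal_circles (n : ℕ) [NeZero n] (hn : 3 < n) (V : ZMod n → ℂ)
    (hconv : IsConvexPolygon V) (hgen : NoFourConcyclic V) :
    (∃ i j : ZMod n, i ≠ j ∧ EmptyNbrCircle V i ∧ EmptyNbrCircle V j) ∧
    (∃ i j : ZMod n, i ≠ j ∧ FullNbrCircle V i ∧ FullNbrCircle V j) := by
  obtain ⟨i, j, hij, hi, hj⟩ := hconv.exists_two_supportingNbr hn.le 1
  obtain ⟨i', j', hij', hi', hj'⟩ := hconv.exists_two_supportingNbr hn.le (-1)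
  exact ⟨⟨i, j, hij, hi.emptyNbrCircle hgen hn.le, hj.emptyNbrCircle hgen hn.le⟩,
    ⟨i', j', hij', hi'.fullNbrCircle hgen hn.le, hj'.fullNbrCircle hgen hn.le⟩⟩
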